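/- Reproducing kernel splitting bound: let f be a continuous function on a torus 𝕋^d with normalized measure, V ∈ L_∞(𝕋^d) a kernel with f = f * V, and B a measurable set. Then ‖f‖_∞ ≤ ‖V‖_1 · sup_{u ∉ B} |f(u)| + |B| · ‖V‖_∞ · ‖f‖_∞; consequently if |B| · ‖V‖_∞ ≤ 1/2 then ‖f‖_∞ ≤ 2‖V‖_1 · sup_{u ∉ B} |f(u)|. -/

import Mathlib

/-!
Since `f = f * V`, `|f x| ≤ ∫ |f u| |V (x - u)| du`. Off `B` bound `|f u|` by `sup_{Bᶜ} |f|` and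
integrate `|V (x - ·)|`, whose L¹ norm is `‖V‖₁` by invariance of Haar measure under `u ↦ x - u`;
on `B` bound the integrand by `‖f‖_∞ ‖V‖_∞`. When `|B| ‖V‖_∞ ≤ 1/2`, the last term is absorbed
into the left-hand side.
-/

open MeasureTheory Real
open scoped ENNReal

namespace RemezKernel

noncomputable section

instance : Fact (0 < 2 * π) := ⟨by positivity⟩

/-- The d-dimensional torus 𝕋^d. -/
abbrev Torus (d : ℕ) := Fin d → AddCircle (2 * π)

/-- Normalized (probability) Haar measure on 𝕋^d. -/
def torusMeasure (d : ℕ) : Measure (Torus d) :=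
  Measure.pi fun _ => AddCircle.haarAddCircle

instance (d : ℕ) : IsProbabilityMeasure (torusMeasure d) := by
  unfold torusMeasure; infer_instance

instance (d : ℕ) : (torusMeasure d).IsAddLeftInvariant := by
  unfold torusMeasure; infer_instance

instance (d : ℕ) : (torusMeasure d).IsNegInvariant :=
  Measure.pi.isNegInvariant _

theorem le_ciSup_mem_of_nonneg {α : Type*} {g : α → ℝ} (hg : BddAbove (Set.range g))
    (hg0 : ∀ a, 0 ≤ g a) {s : Set α} {a : α} (ha : a ∈ s) : g a ≤ ⨆ b ∈ s, g b := by
  obtain ⟨C, hC⟩ := hg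
  have hbdd : BddAbove (Set.range fun b => ⨆ _ : b ∈ s, g b) := by
    refine ⟨C, ?_⟩
    rintro _ ⟨b, rfl⟩
    exact Real.iSup_le (fun _ => hC ⟨b, rfl⟩) ((hg0 b).trans (hC ⟨b, rfl⟩))
  exact le_ciSup_of_le hbdd a (ciSup_pos (f := fun _ => g a) ha).ge

section Splitting

variable {α ε ε' : Type*} [MeasurableSpace α] {μ : Measure α} [ENorm ε] [ENorm ε']

theorem lintegral_enorm_mul_le_of_le_compl {f : α → ε} {K : α → ε'} {B : Set α}
    (hB : MeasurableSet B) {m M : ℝ≥0∞} (hm : m ≠ ∞) (hfB : ∀ u ∉ B, ‖f u‖ₑ ≤ m)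
    (hf : ∀ u, ‖f u‖ₑ ≤ M) :
    ∫⁻ u, ‖f u‖ₑ * ‖K u‖ₑ ∂μ ≤ m * eLpNorm K 1 μ + M * eLpNorm K ⊤ μ * μ B := by
  have hpointwise : ∀ᵐ u ∂μ, ‖f u‖ₑ * ‖K u‖ₑ ≤
      m * ‖K u‖ₑ + B.indicator (fun _ => M * eLpNorm K ⊤ μ) u := by
    filter_upwards [ae_le_eLpNormEssSup (f := K)] with u hKu
    by_cases huB : u ∈ B
    · rw [Set.indicator_of_mem huB, eLpNorm_exponent_top]
      exact le_add_left (mul_le_mul' (hf u) hKu)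
    · rw [Set.indicator_of_notMem huB, add_zero]
      exact mul_le_mul_left (hfB u huB) _
  calc ∫⁻ u, ‖f u‖ₑ * ‖K u‖ₑ ∂μ
      ≤ ∫⁻ u, (m * ‖K u‖ₑ + B.indicator (fun _ => M * eLpNorm K ⊤ μ) u) ∂μ :=
        lintegral_mono_ae hpointwise
    _ = m * ∫⁻ u, ‖K u‖ₑ ∂μ + ∫⁻ u, B.indicator (fun _ => M * eLpNorm K ⊤ μ) u ∂μ := by
        rw [lintegral_add_right _ (measurable_const.indicator hB), lintegral_const_mul' _ _ hm]
    _ = m * eLpNorm K 1 μ + M * eLpNorm K ⊤ μ * μ B := by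
        rw [eLpNorm_one_eq_lintegral_enorm, lintegral_indicator_const hB]

theorem eLpNorm_eq_zero_of_eLpNorm_top_eq_zero {E : Type*} [NormedAddCommGroup E] {f : α → E}
    (hf : eLpNorm f ⊤ μ = 0) (p : ℝ≥0∞) : eLpNorm f p μ = 0 := by
  rw [eLpNorm_exponent_top, eLpNormEssSup_eq_zero_iff] at hf
  rw [eLpNorm_congr_ae hf, eLpNorm_zero]

end Splitting

section Reproducing

variable {G 𝕜 : Type*} [MeasurableSpace G] [AddGroup G] [MeasurableAdd G] [MeasurableNeg G]
  {μ : Measure G} [μ.IsAddLeftInvariant] [μ.IsNegInvariant] [NormedField 𝕜] [NormedSpace ℝ 𝕜]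

theorem eLpNorm_comp_sub_left {ε : Type*} [TopologicalSpace ε] [ContinuousENorm ε] (V : G → ε)
    (p : ℝ≥0∞) (x : G) :
    eLpNorm (fun u => V (x - u)) p μ = eLpNorm V p μ := by
  have hmap : μ.map (MeasurableEquiv.subLeft x) = μ :=
    (Measure.measurePreserving_sub_left μ x).map_eq
  conv_rhs => rw [← hmap]
  exact ((MeasurableEquiv.subLeft x).measurableEmbedding.eLpNorm_map_measure (g := V)).symm

theorem enorm_le_of_eq_integral_mul_sub {f V : G → 𝕜}
    (hrep : ∀ x, f x = ∫ u, f u * V (x - u) ∂μ) {B : Set G} (hB : MeasurableSet B)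
    {m M : ℝ≥0∞} (hm : m ≠ ∞) (hfB : ∀ u ∉ B, ‖f u‖ₑ ≤ m) (hf : ∀ u, ‖f u‖ₑ ≤ M) (x : G) :
    ‖f x‖ₑ ≤ m * eLpNorm V 1 μ + M * eLpNorm V ⊤ μ * μ B :=
  calc ‖f x‖ₑ ≤ ∫⁻ u, ‖f u‖ₑ * ‖V (x - u)‖ₑ ∂μ := by
        simpa only [← hrep x, enorm_mul] using
          enorm_integral_le_lintegral_enorm (μ := μ) fun u => f u * V (x - u)
    _ ≤ _ := lintegral_enorm_mul_le_of_le_compl hB hm hfB hf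
    _ = _ := by rw [eLpNorm_comp_sub_left, eLpNorm_comp_sub_left]

theorem eq_zero_of_eq_integral_mul_sub_of_eLpNorm_eq_zero {f V : G → 𝕜}
    (hrep : ∀ x, f x = ∫ u, f u * V (x - u) ∂μ) {M : ℝ≥0∞} (hM : M ≠ ∞)
    (hf : ∀ u, ‖f u‖ₑ ≤ M) (hV : eLpNorm V 1 μ = 0) : f = 0 := by
  funext x
  simpa [hV] using
    enorm_le_of_eq_integral_mul_sub hrep MeasurableSet.empty hM (fun u _ => hf u) hf x

end Reproducing

/-- reproducing kernel splitting bound: if f = f * V then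
‖f‖_∞ ≤ ‖V‖_1 sup_{Bᶜ}|f| + |B| ‖V‖_∞ ‖f‖_∞, and consequently if
|B| ‖V‖_∞ ≤ 1/2 then ‖f‖_∞ ≤ 2 ‖V‖_1 sup_{Bᶜ}|f|. -/
theorem kernel_splitting_bound
    {d : ℕ} (f V : Torus d → ℂ) (hf : Continuous f)
    (V1 Vinf : ℝ)
    (hV1 : eLpNorm V 1 (torusMeasure d) = ENNReal.ofReal V1)
    (hVinf : eLpNorm V ⊤ (torusMeasure d) = ENNReal.ofReal Vinf)
    (hrep : ∀ x, f x = ∫ u, f u * V (x - u) ∂(torusMeasure d))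
    (B : Set (Torus d)) (hB : MeasurableSet B) :
    (⨆ x, ‖f x‖) ≤ V1 * (⨆ u ∈ Bᶜ, ‖f u‖) +
        (torusMeasure d B).toReal * Vinf * ⨆ x, ‖f x‖ ∧
    ((torusMeasure d B).toReal * Vinf ≤ 1 / 2 →
      (⨆ x, ‖f x‖) ≤ 2 * V1 * ⨆ u ∈ Bᶜ, ‖f u‖) := by
  set μ := torusMeasure d
  set M := ⨆ x, ‖f x‖
  set MB := ⨆ u ∈ Bᶜ, ‖f u‖
  have hbdd : BddAbove (Set.range fun x => ‖f x‖) := (isCompact_range hf.norm).bddAbove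
  have hfM : ∀ u, ‖f u‖ₑ ≤ ENNReal.ofReal M := fun u => by
    rw [← ofReal_norm]; exact ENNReal.ofReal_le_ofReal (le_ciSup hbdd u)
  have hfMB : ∀ u ∉ B, ‖f u‖ₑ ≤ ENNReal.ofReal MB := fun u hu => by
    rw [← ofReal_norm]
    exact ENNReal.ofReal_le_ofReal (le_ciSup_mem_of_nonneg hbdd (fun _ => norm_nonneg _) hu)
  -- `ENNReal.ofReal` truncates, so `V1 ≤ 0` or `Vinf < 0` is possible only when `‖V‖₁ = 0`.
  by_cases hN : eLpNorm V 1 μ = 0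
  · have hf0 : f = 0 :=
      eq_zero_of_eq_integral_mul_sub_of_eLpNorm_eq_zero hrep ENNReal.ofReal_ne_top hfM hN
    simp [M, MB, hf0]
  have hV1pos : 0 < V1 := by rwa [hV1, ENNReal.ofReal_eq_zero, not_le] at hN
  have hVinf0 : 0 ≤ Vinf := by
    by_contra! hneg
    refine hN (eLpNorm_eq_zero_of_eLpNorm_top_eq_zero ?_ 1)
    rw [hVinf, ENNReal.ofReal_of_nonpos hneg.le]
  have hM0 : 0 ≤ M := Real.iSup_nonneg fun x => norm_nonneg _
  have hMB0 : 0 ≤ MB := Real.iSup_nonneg fun u => Real.iSup_nonneg fun _ => norm_nonneg _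
  have hpointwise : ∀ x, ‖f x‖ ≤ V1 * MB + (μ B).toReal * Vinf * M := fun x => by
    have h := enorm_le_of_eq_integral_mul_sub hrep hB ENNReal.ofReal_ne_top hfMB hfM x
    rw [hV1, hVinf, ← ofReal_norm, ← ENNReal.ofReal_toReal (measure_ne_top μ B),
      ← ENNReal.ofReal_mul hMB0, ← ENNReal.ofReal_mul hM0, ← ENNReal.ofReal_mul (by positivity),
      ← ENNReal.ofReal_add (by positivity) (by positivity),
      ENNReal.ofReal_le_ofReal_iff (by positivity)] at h
    exact h.trans_eq (by ring)
  have hmain : M ≤ V1 * MB + (μ B).toReal * Vinf * M := ciSup_le hpointwise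
  exact ⟨hmain, fun hsmall => by nlinarith [mul_le_mul_of_nonneg_right hsmall hM0]⟩

end

end RemezKernel
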